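/- The Fibonacci word contains a square suffix of every prefix of length n ≥ 6; that is, for every n ≥ 6, some suffix of the length-n prefix of the Fibonacci word is a square. -/
import Mathlib


/-- `u` is a factor (contiguous block) of the infinite word `x`. -/
def FactorOf {α : Type*} (u : List α) (x : ℕ → α) : Prop :=
  ∃ i, u = (List.range u.length).map fun t => x (i + t)

/-- Subword complexity: number of distinct length-`n` factors of `x`. -/
noncomputable def Complexity {α : Type*} (x : ℕ → α) (n : ℕ) : ℕ :=
  Set.ncard {u : List α | u.length = n ∧ FactorOf u x}

/-- A Sturmian word: infinite binary word with exactly `n+1` factors of each length `n`. -/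
def Sturmian (x : ℕ → Bool) : Prop := ∀ n, Complexity x n = n + 1

/-- A balanced binary word: counts of each letter in equal-length factors differ by at most 1. -/
def BalancedWord (w : List Bool) : Prop :=
  ∀ u v : List Bool, u <:+: w → v <:+: w → u.length = v.length →
    ∀ a : Bool, ((u.count a : ℤ) - (v.count a : ℤ)).natAbs ≤ 1

/-- The finite word `w` has period `p`: `w[i] = w[i+p]` for all valid `i`. -/
def HasPeriodL {α : Type*} (w : List α) (p : ℕ) : Prop :=
  ∀ i, i + p < w.length → w[i]? = w[i + p]?

/-- A cube of period `j ≥ 1` ends at position `n` of the infinite word `x`. -/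
def CubeEndAt {α : Type*} (x : ℕ → α) (n : ℕ) : Prop :=
  ∃ i j, 1 ≤ j ∧ i + 3 * j = n ∧ ∀ t < 2 * j, x (i + t) = x (i + j + t)

/-- A cube of period `j ≥ 1` ends at position `n` of the finite word `w`. -/
def CubeEnd (w : List Bool) (j n : ℕ) : Prop :=
  1 ≤ j ∧ n ≤ w.length ∧ ∃ i, i + 3 * j = n ∧ ∀ t < 2 * j, w[i + t]? = w[i + j + t]?


/-- The Fibonacci morphism `0 → 01`, `1 → 0`. -/
def fibMorph : Bool → List Bool
  | false => [false, true]
  | true => [false]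

/-- Iterates of the Fibonacci morphism on `0`. -/
def fibIter : ℕ → List Bool
  | 0 => [false]
  | n + 1 => (fibIter n).flatMap fibMorph

/-- The Fibonacci word, fixed point of `0 → 01`, `1 → 0` (each `fibIter n` is a
prefix of `fibIter (n+1)`, and `fibIter (n+1)` has length `> n`). -/
def fibWord (n : ℕ) : Bool := (fibIter (n + 1)).getD n false
lemma fibIter_rec : ∀ n, fibIter (n+2) = fibIter (n+1) ++ fibIter n := by
  intro n
  induction n with
  | zero => decide
  | succ n ih =>
    show (fibIter (n+2)).flatMap fibMorph = fibIter (n+2) ++ fibIter (n+1)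
    conv_lhs => rw [ih]
    rw [List.flatMap_append]
    rfl

lemma fibIter_prefix (n : ℕ) : fibIter n <+: fibIter (n+1) := by
  cases n with
  | zero => decide
  | succ n => rw [fibIter_rec]; exact List.prefix_append _ _

lemma fibIter_prefix_le {k k' : ℕ} (h : k ≤ k') : fibIter k <+: fibIter k' := by
  induction h with
  | refl => exact List.prefix_refl _
  | step h ih => exact ih.trans (fibIter_prefix _)

lemma fibIter_length : ∀ n, n + 1 ≤ (fibIter n).length := by
  intro n
  induction n using Nat.strong_induction_on with
  | _ n ih =>
    match n with
    | 0 => decide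
    | 1 => decide
    | (n+2) =>
      rw [fibIter_rec, List.length_append]
      have h1 := ih (n+1) (by omega)
      have h2 := ih n (by omega)
      omega

lemma getD_prefix {l1 l2 : List Bool} (h : l1 <+: l2) {n : ℕ} (hn : n < l1.length) :
    l2.getD n false = l1.getD n false := by
  obtain ⟨t, rfl⟩ := h
  simp [List.getD_eq_getElem?_getD, List.getElem?_append_left hn]

lemma fibWord_eq (k n : ℕ) (h : n < (fibIter k).length) :
    fibWord n = (fibIter k).getD n false := by
  have hn1 : n < (fibIter (n+1)).length := by have := fibIter_length (n+1); omega
  rcases le_total k (n+1) with hk | hk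
  · rw [fibWord, getD_prefix (fibIter_prefix_le hk) h]
  · rw [fibWord, getD_prefix (fibIter_prefix_le hk) hn1]

def fibPrefix (n : ℕ) : List Bool := (List.range n).map fibWord

lemma fibPrefix_eq_take (k n : ℕ) (h : n ≤ (fibIter k).length) :
    fibPrefix n = (fibIter k).take n := by
  apply List.ext_getElem
  · simp [fibPrefix]; omega
  · intro i h1 h2
    simp only [fibPrefix, List.length_map, List.length_range] at h1
    simp only [fibPrefix, List.getElem_map, List.getElem_range, List.getElem_take]
    rw [fibWord_eq k i (by omega), List.getD_eq_getElem _ _ (by omega)]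

def Lf (m : ℕ) : ℕ := ((fibPrefix m).flatMap fibMorph).length

lemma flatMap_fibPrefix (m : ℕ) : (fibPrefix m).flatMap fibMorph = fibPrefix (Lf m) := by
  have hm : m ≤ (fibIter m).length := by have := fibIter_length m; omega
  have hpre : (fibPrefix m).flatMap fibMorph <+: fibIter (m+1) := by
    refine ⟨((fibIter m).drop m).flatMap fibMorph, ?_⟩
    rw [fibPrefix_eq_take m m hm, ← List.flatMap_append, List.take_append_drop]
    rfl
  rw [List.prefix_iff_eq_take.mp hpre, fibPrefix_eq_take (m+1) (Lf m) hpre.length_le]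
  rfl

lemma fibPrefix_succ (m : ℕ) : fibPrefix (m+1) = fibPrefix m ++ [fibWord m] := by
  simp [fibPrefix, List.range_succ]

lemma Lf_succ (m : ℕ) : Lf (m+1) = Lf m + (fibMorph (fibWord m)).length := by
  simp [Lf, fibPrefix_succ, List.flatMap_append]

lemma fibPrefix_getD (n i : ℕ) (h : i < n) :
    (fibPrefix n).getD i false = fibWord i := by
  rw [List.getD_eq_getElem _ _ (by simp [fibPrefix]; omega)]
  simp [fibPrefix]

lemma fibPrefix_length (n : ℕ) : (fibPrefix n).length = n := by simp [fibPrefix]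

lemma block (m t : ℕ) (ht : t < (fibMorph (fibWord m)).length) :
    fibWord (Lf m + t) = (fibMorph (fibWord m)).getD t false := by
  have hsucc : fibPrefix (Lf (m+1)) = fibPrefix (Lf m) ++ fibMorph (fibWord m) := by
    rw [← flatMap_fibPrefix, ← flatMap_fibPrefix, fibPrefix_succ, List.flatMap_append]
    simp
  have hlt : Lf m + t < Lf (m+1) := by rw [Lf_succ]; omega
  rw [← fibPrefix_getD (Lf (m+1)) _ hlt, hsucc,
    List.getD_append_right _ _ _ _ (by rw [fibPrefix_length]; omega), fibPrefix_length]
  congr 1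
  omega

lemma Lf_zero : Lf 0 = 0 := rfl
lemma fibWord_Lf (m : ℕ) : fibWord (Lf m) = false := by
  have h := block m 0 (by cases h : fibWord m <;> simp [fibMorph, h])
  rw [Nat.add_zero] at h
  rw [h]
  cases h' : fibWord m <;> simp [fibMorph, h']

lemma Lf_succ_of_false {m : ℕ} (h : fibWord m = false) :
    Lf (m+1) = Lf m + 2 ∧ fibWord (Lf m + 1) = true := by
  constructor
  · rw [Lf_succ, h]; rfl
  · have hb := block m 1 (by simp [fibMorph, h])
    rw [hb, h]; rfl

lemma Lf_succ_of_true {m : ℕ} (h : fibWord m = true) : Lf (m+1) = Lf m + 1 := by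
  rw [Lf_succ, h]; rfl

lemma Lf_lt_succ (m : ℕ) : Lf m < Lf (m+1) := by
  cases h : fibWord m
  · have := (Lf_succ_of_false h).1; omega
  · have := Lf_succ_of_true h; omega

lemma Lf_strictMono : StrictMono Lf := strictMono_nat_of_lt_succ Lf_lt_succ

lemma exists_block (n : ℕ) : ∃ m, Lf m ≤ n ∧ n < Lf (m+1) := by
  induction n with
  | zero => exact ⟨0, le_refl _, by have := Lf_lt_succ 0; rw [Lf_zero] at this; omega⟩
  | succ n ih =>
    obtain ⟨m, h1, h2⟩ := ih
    by_cases h : n + 1 < Lf (m+1)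
    · exact ⟨m, by omega, h⟩
    · exact ⟨m+1, by omega, by have := Lf_lt_succ (m+1); omega⟩

lemma boundary {n : ℕ} (h : fibWord n = false) : ∃ m, n = Lf m := by
  obtain ⟨m, h1, h2⟩ := exists_block n
  rcases eq_or_lt_of_le h1 with he | hl
  · exact ⟨m, he.symm⟩
  · exfalso
    cases hm : fibWord m
    · obtain ⟨hL, hw⟩ := Lf_succ_of_false hm
      have : n = Lf m + 1 := by omega
      rw [this, hw] at h; exact Bool.noConfusion h
    · have := Lf_succ_of_true hm; omega

lemma no11 (n : ℕ) : ¬(fibWord n = true ∧ fibWord (n+1) = true) := by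
  rintro ⟨h1, h2⟩
  obtain ⟨m, hm1, hm2⟩ := exists_block n
  have hne : n ≠ Lf m := by intro he; rw [he, fibWord_Lf] at h1; exact Bool.noConfusion h1
  cases hfm : fibWord m
  · obtain ⟨hL, hw⟩ := Lf_succ_of_false hfm
    have hn : n = Lf m + 1 := by omega
    have : n + 1 = Lf (m+1) := by omega
    rw [this, fibWord_Lf] at h2; exact Bool.noConfusion h2
  · have := Lf_succ_of_true hfm; omega

lemma no000 (n : ℕ) :
    ¬(fibWord n = false ∧ fibWord (n+1) = false ∧ fibWord (n+2) = false) := by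
  rintro ⟨h0, h1, h2⟩
  obtain ⟨m, hm⟩ := boundary h0
  have hfm : fibWord m = true := by
    cases hfm : fibWord m
    · obtain ⟨_, hw⟩ := Lf_succ_of_false hfm
      rw [hm] at h1; rw [hw] at h1; exact Bool.noConfusion h1
    · rfl
  have hL1 : Lf (m+1) = n + 1 := by rw [Lf_succ_of_true hfm, hm]
  have hfm1 : fibWord (m+1) = true := by
    cases hfm1 : fibWord (m+1)
    · obtain ⟨_, hw⟩ := Lf_succ_of_false hfm1
      rw [hL1] at hw; rw [hw] at h2; exact Bool.noConfusion h2
    · rfl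
  exact no11 m ⟨hfm, hfm1⟩

lemma false_of_succ_true {n : ℕ} (h : fibWord (n+1) = true) : fibWord n = false := by
  cases hx : fibWord n
  · rfl
  · exact absurd ⟨hx, h⟩ (no11 n)

lemma fibPrefix_add (a b : ℕ) :
    fibPrefix (a+b) = fibPrefix a ++ (List.range b).map (fun t => fibWord (a+t)) := by
  simp [fibPrefix, List.range_add, List.map_map, Function.comp]

lemma sqSuffix (a k : ℕ) (hk : 1 ≤ k) (h : ∀ t < k, fibWord (a+t) = fibWord (a+k+t)) :
    ∃ u : List Bool, u ≠ [] ∧ u ++ u <:+ fibPrefix (a+k+k) := by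
  refine ⟨(List.range k).map (fun t => fibWord (a+t)), by simp; omega, fibPrefix a, ?_⟩
  rw [fibPrefix_add (a+k) k, fibPrefix_add a k, List.append_assoc]
  congr 1
  congr 1
  apply List.map_congr_left
  intro t ht
  exact h t (List.mem_range.mp ht)

lemma sq_morph (m : ℕ) (h : ∃ u : List Bool, u ≠ [] ∧ u ++ u <:+ fibPrefix m) :
    ∃ u : List Bool, u ≠ [] ∧ u ++ u <:+ fibPrefix (Lf m) := by
  obtain ⟨u, hu, t, ht⟩ := h
  refine ⟨u.flatMap fibMorph, ?_, t.flatMap fibMorph, ?_⟩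
  · cases u with
    | nil => exact absurd rfl hu
    | cons b l => cases b <;> simp [fibMorph]
  · rw [← flatMap_fibPrefix, ← ht]
    simp [List.flatMap_append]

lemma Lf_one : Lf 1 = 2 := by decide

lemma lt_Lf : ∀ m, 1 ≤ m → m < Lf m := by
  intro m
  induction m with
  | zero => omega
  | succ m ih =>
    intro _
    cases Nat.eq_zero_or_pos m with
    | inl h0 => subst h0; rw [Lf_one]; omega
    | inr h1 =>
      have := ih h1
      have := Lf_lt_succ m
      omega

lemma Lf_six : Lf 6 = 10 := by decide

lemma fibMain : ∀ n, 6 ≤ n → ∃ u : List Bool, u ≠ [] ∧ u ++ u <:+ fibPrefix n := by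
  intro n
  induction n using Nat.strong_induction_on with
  | _ n ih =>
    intro hn
    cases hfn : fibWord n with
    | true =>
      have h1 : fibWord (n-1) = false := by
        apply false_of_succ_true
        rw [show n-1+1 = n from by omega]; exact hfn
      cases hf2 : fibWord (n-2) with
      | false =>
        have := sqSuffix (n-2) 1 le_rfl ?_
        · rwa [show n-2+1+1 = n from by omega] at this
        · intro t ht
          interval_cases t
          rw [show n-2+0 = n-2 from by omega, show n-2+1+0 = n-1 from by omega, hf2, h1]
      | true =>
        have h3 : fibWord (n-3) = false := by
          apply false_of_succ_true
          rw [show n-3+1 = n-2 from by omega]; exact hf2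
        cases hf4 : fibWord (n-4) with
        | true =>
          have := sqSuffix (n-4) 2 (by omega) ?_
          · rwa [show n-4+2+2 = n from by omega] at this
          · intro t ht
            interval_cases t
            · rw [show n-4+0 = n-4 from by omega, show n-4+2+0 = n-2 from by omega, hf4, hf2]
            · rw [show n-4+1 = n-3 from by omega, show n-4+2+1 = n-1 from by omega, h3, h1]
        | false =>
          have h5 : fibWord (n-5) = true := by
            cases hx : fibWord (n-5)
            · exfalso
              apply no000 (n-5)
              refine ⟨hx, ?_, ?_⟩
              · rw [show n-5+1 = n-4 from by omega]; exact hf4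
              · rw [show n-5+2 = n-3 from by omega]; exact h3
            · rfl
          have h6 : fibWord (n-6) = false := by
            apply false_of_succ_true
            rw [show n-6+1 = n-5 from by omega]; exact h5
          have := sqSuffix (n-6) 3 (by omega) ?_
          · rwa [show n-6+3+3 = n from by omega] at this
          · intro t ht
            interval_cases t
            · rw [show n-6+0 = n-6 from by omega, show n-6+3+0 = n-3 from by omega, h6, h3]
            · rw [show n-6+1 = n-5 from by omega, show n-6+3+1 = n-2 from by omega, h5, hf2]
            · rw [show n-6+2 = n-4 from by omega, show n-6+3+2 = n-1 from by omega, hf4, h1]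
    | false =>
      rcases Nat.lt_or_ge n 10 with h10 | h10
      · interval_cases n
        · exact absurd hfn (by decide)
        · exact ⟨[false,true], by decide, ⟨[false,true,false], by decide⟩⟩
        · exact ⟨[true,false], by decide, ⟨[false,true,false,false], by decide⟩⟩
        · exact absurd hfn (by decide)
      · obtain ⟨m, hm⟩ := boundary hfn
        have hm6 : 6 ≤ m := by
          by_contra h
          have : Lf m < Lf 6 := Lf_strictMono (by omega)
          rw [Lf_six] at this; omega
        have hmn : m < n := by
          have := lt_Lf m (by omega); omega
        have := sq_morph m (ih m hmn hm6)
        rwa [← hm] at this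


theorem stmt16 (n : ℕ) (hn : 6 ≤ n) :
    ∃ u : List Bool, u ≠ [] ∧ (u ++ u) <:+ (List.range n).map fibWord := by
  exact fibMain n hn
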